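/- With Φ(t,s) and A(t) as defined, for every fixed s ∈ ℝ the map t ↦ Φ(t,s) is differentiable and satisfies the matrix differential equation ∂Φ/∂t(t,s) = A(t)·Φ(t,s) for all t ∈ ℝ. -/

import Mathlib

noncomputable section

def f₁ (t s : ℝ) : ℝ := 3 + 3 * s ^ 2 + 2 * s ^ 4 + 3 * t * s + t ^ 3 * s

def f₂ (t s : ℝ) : ℝ :=
  -3 * t - 3 * t * s ^ 2 - 2 * t * s ^ 4 + 3 * s + 3 * s * t ^ 2 + 2 * s * t ^ 4

def Φ (t s : ℝ) : Matrix (Fin 2) (Fin 2) ℝ :=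
  (1 / (3 * Real.sqrt ((1 + t ^ 2) * (1 + s ^ 2)))) •
    !![f₁ t s / (1 + s ^ 2), -3 * s - s ^ 3 + 3 * t + t ^ 3;
       f₂ t s / ((1 + t ^ 2) * (1 + s ^ 2)),
       (3 + 3 * t * s + t * s ^ 3 + 3 * t ^ 2 + 2 * t ^ 4) / (1 + t ^ 2)]

def A (t : ℝ) : Matrix (Fin 2) (Fin 2) ℝ :=
  !![0, 1; (2 * t ^ 2 - 1) / (1 + t ^ 2) ^ 2, 0]

/-! `y₁ = (1 + t²)^(-1/2)` solves `y'' = a y` with `a = (2t² - 1)/(1 + t²)²`, and reduction of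
order gives the second solution `y₂ = y₁ ∫ y₁⁻² = y₁ (t + t³/3)`. Their Wronskian is `1`, so the
fundamental matrix `Y = [[y₁, y₂], [y₁', y₂']]` is invertible and `Φ(t, s) = Y(t) Y(s)⁻¹`.
As `Y' = A Y` and `Y(s)⁻¹` does not depend on `t`, `∂ₜΦ = A Φ`. -/

open Real

theorem hasDerivAt_matrix_mul_const_apply {𝕜 : Type*} [NontriviallyNormedField 𝕜]
    {m n p : Type*} [Fintype n] {Y : 𝕜 → Matrix m n 𝕜} {Y' : Matrix m n 𝕜} {t : 𝕜}
    (hY : ∀ i j, HasDerivAt (fun u => Y u i j) (Y' i j) t) (M : Matrix n p 𝕜) (i : m) (j : p) :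
    HasDerivAt (fun u => (Y u * M) i j) ((Y' * M) i j) t := by
  simp only [Matrix.mul_apply]
  exact HasDerivAt.fun_sum fun k _ => (hY i k).mul_const (M k j)

theorem hasDerivAt_inv_sqrt_one_add_sq (t : ℝ) :
    HasDerivAt (fun u => (√(1 + u ^ 2))⁻¹) (-(t / (1 + t ^ 2)) * (√(1 + t ^ 2))⁻¹) t := by
  have hpos : 0 < 1 + t ^ 2 := by positivity
  refine ((((hasDerivAt_pow 2 t).const_add 1).sqrt hpos.ne').fun_inv
    (sqrt_pos.2 hpos).ne').congr_deriv ?_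
  rw [sq_sqrt hpos.le]
  field_simp
  ring

def scaledFundamentalMatrix (t : ℝ) : Matrix (Fin 2) (Fin 2) ℝ :=
  !![1, (3 * t + t ^ 3) / 3; -t / (1 + t ^ 2), (3 + 3 * t ^ 2 + 2 * t ^ 4) / (3 * (1 + t ^ 2))]

def fundamentalMatrix (t : ℝ) : Matrix (Fin 2) (Fin 2) ℝ :=
  (√(1 + t ^ 2))⁻¹ • scaledFundamentalMatrix t

theorem hasDerivAt_scaledFundamentalMatrix (t : ℝ) (i j : Fin 2) :
    HasDerivAt (fun u => scaledFundamentalMatrix u i j)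
      ((A t * scaledFundamentalMatrix t + (t / (1 + t ^ 2)) • scaledFundamentalMatrix t) i j)
      t := by
  have hpos : 0 < 1 + t ^ 2 := by positivity
  have hden : HasDerivAt (fun u : ℝ => 1 + u ^ 2) (2 * t) t := by
    simpa using (hasDerivAt_pow 2 t).const_add 1
  fin_cases i <;> fin_cases j <;>
    simp only [scaledFundamentalMatrix, A, Matrix.add_apply, Matrix.smul_apply, Matrix.mul_apply,
      Fin.sum_univ_two, smul_eq_mul, Fin.zero_eta, Fin.mk_one, Fin.isValue, Matrix.of_apply,
      Matrix.cons_val', Matrix.cons_val_zero, Matrix.cons_val_one, Matrix.empty_val',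
      Matrix.cons_val_fin_one]
  · refine (hasDerivAt_const t (1 : ℝ)).congr_deriv ?_
    field_simp; ring
  · have hnum := ((hasDerivAt_id' t).const_mul 3).fun_add (hasDerivAt_pow 3 t)
    refine (hnum.div_const 3).congr_deriv ?_
    field_simp; ring
  · refine ((hasDerivAt_id' t).fun_neg.fun_div hden hpos.ne').congr_deriv ?_
    field_simp; ring
  · have hnum := (((hasDerivAt_pow 2 t).const_mul 3).const_add 3).fun_add
      ((hasDerivAt_pow 4 t).const_mul 2)
    refine (hnum.fun_div (hden.const_mul 3) (by positivity)).congr_deriv ?_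
    field_simp; ring

theorem hasDerivAt_fundamentalMatrix (t : ℝ) (i j : Fin 2) :
    HasDerivAt (fun u => fundamentalMatrix u i j) ((A t * fundamentalMatrix t) i j) t := by
  refine ((hasDerivAt_inv_sqrt_one_add_sq t).fun_mul
    (hasDerivAt_scaledFundamentalMatrix t i j)).congr_deriv ?_
  simp only [fundamentalMatrix, Matrix.mul_smul, Matrix.smul_apply, Matrix.add_apply, smul_eq_mul]
  ring

theorem det_fundamentalMatrix (t : ℝ) : (fundamentalMatrix t).det = 1 := by
  have hpos : 0 < 1 + t ^ 2 := by positivity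
  rw [fundamentalMatrix, Matrix.det_smul, Matrix.det_fin_two, inv_pow, Fintype.card_fin,
    sq_sqrt hpos.le]
  simp only [scaledFundamentalMatrix, Matrix.of_apply, Matrix.cons_val', Matrix.cons_val_zero,
    Matrix.cons_val_one, Matrix.empty_val', Matrix.cons_val_fin_one]
  field_simp
  ring

theorem Φ_eq_fundamentalMatrix_mul_inv (t s : ℝ) :
    Φ t s = fundamentalMatrix t * (fundamentalMatrix s)⁻¹ := by
  have ht : 0 < √(1 + t ^ 2) := sqrt_pos.2 (by positivity)
  have hs : 0 < √(1 + s ^ 2) := sqrt_pos.2 (by positivity)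
  rw [Φ, sqrt_mul (by positivity), Matrix.inv_def, det_fundamentalMatrix, Ring.inverse_one,
    one_smul, Matrix.adjugate_fin_two]
  ext i j
  fin_cases i <;> fin_cases j <;>
    simp only [f₁, f₂, fundamentalMatrix, scaledFundamentalMatrix, Matrix.mul_apply,
      Fin.sum_univ_two, Matrix.smul_apply, Matrix.of_apply, Matrix.cons_val', Matrix.cons_val_zero,
      Matrix.cons_val_one, Matrix.cons_val_fin_one, Matrix.smul_of, Matrix.smul_cons,
      Matrix.smul_empty, Fin.zero_eta, Fin.mk_one, Fin.isValue, smul_eq_mul] <;>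
    field_simp <;> ring

theorem cauchy_matrix_solves_ode :
    ∀ s t : ℝ, ∀ i j : Fin 2,
      HasDerivAt (fun u : ℝ => Φ u s i j) ((A t * Φ t s) i j) t := by
  intro s t i j
  simp_rw [Φ_eq_fundamentalMatrix_mul_inv, ← Matrix.mul_assoc]
  exact hasDerivAt_matrix_mul_const_apply (hasDerivAt_fundamentalMatrix t) _ i j
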